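/- arXiv:1409.6753 — 2 statements merged into one kernel-verified Lean document; each statement's English description precedes it below -/
import Mathlib

section
/- Suppose G : ℝ⁵ × ℝ⁵ → ℝ satisfies G(Λx, Λy) = G(x, y) for every orthochronous Lorentz transformation Λ and all x, y ∈ ℝ⁵, and suppose G is antisymmetric: G(x,y) = −G(y,x) for all x, y. Then G(ℓ₁, ℓ₂) = 0 for every pair of future-pointing null vectors ℓ₁, ℓ₂ with B(ℓ₁,ℓ₂) ≠ 0. (There is no nonvanishing Lorentz-invariant antisymmetric kernel on the light cone; this is the key step showing there is no SO(4,1)-invariant symplectic form on asymptotic boundary data in elliptic de Sitter space.) -/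
noncomputable section

/-- The Minkowski bilinear form on ℝ^{1,4}. -/
def B (x y : Fin 5 → ℝ) : ℝ :=
  -(x 0 * y 0) + x 1 * y 1 + x 2 * y 2 + x 3 * y 3 + x 4 * y 4

/-- A future-pointing null vector. -/
def FutureNull (ℓ : Fin 5 → ℝ) : Prop :=
  ℓ ≠ 0 ∧ B ℓ ℓ = 0 ∧ 0 < ℓ 0

/-- An orthochronous Lorentz transformation. -/
def IsOrthochronousLorentz (Λ : (Fin 5 → ℝ) ≃ₗ[ℝ] (Fin 5 → ℝ)) : Prop :=
  (∀ x y, B (Λ x) (Λ y) = B x y) ∧ (∀ ℓ, FutureNull ℓ → 0 < (Λ ℓ) 0)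

lemma B_symm (x y : Fin 5 → ℝ) : B x y = B y x := by simp only [B]; ring

lemma B_neg_right (x y : Fin 5 → ℝ) : B x (-y) = -B x y := by
  simp only [B, Pi.neg_apply]; ring

lemma B_null_zero {m : Fin 5 → ℝ} (hm : B m m = 0) (h0 : m 0 = 0) : m = 0 := by
  simp only [B, h0] at hm
  have h1 : m 1 = 0 := by nlinarith [sq_nonneg (m 2), sq_nonneg (m 3), sq_nonneg (m 4)]
  have h2 : m 2 = 0 := by nlinarith [sq_nonneg (m 1), sq_nonneg (m 3), sq_nonneg (m 4)]
  have h3 : m 3 = 0 := by nlinarith [sq_nonneg (m 1), sq_nonneg (m 2), sq_nonneg (m 4)]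
  have h4 : m 4 = 0 := by nlinarith [sq_nonneg (m 1), sq_nonneg (m 2), sq_nonneg (m 3)]
  funext i
  fin_cases i <;> simp only [Pi.zero_apply] <;> first | exact h0 | exact h1 | exact h2 | exact h3 | exact h4

lemma B_nonpos_of_future {ℓ m : Fin 5 → ℝ} (hℓ : FutureNull ℓ) (hm : FutureNull m) :
    B ℓ m ≤ 0 := by
  obtain ⟨-, hℓn, hℓ0⟩ := hℓ
  obtain ⟨-, hmn, hm0⟩ := hm
  simp only [B] at hℓn hmn ⊢
  nlinarith [sq_nonneg (ℓ 1 * m 2 - ℓ 2 * m 1), sq_nonneg (ℓ 1 * m 3 - ℓ 3 * m 1),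
    sq_nonneg (ℓ 1 * m 4 - ℓ 4 * m 1), sq_nonneg (ℓ 2 * m 3 - ℓ 3 * m 2),
    sq_nonneg (ℓ 2 * m 4 - ℓ 4 * m 2), sq_nonneg (ℓ 3 * m 4 - ℓ 4 * m 3),
    mul_pos hℓ0 hm0, sq_nonneg (ℓ 0 * m 0 + (ℓ 1 * m 1 + ℓ 2 * m 2 + ℓ 3 * m 3 + ℓ 4 * m 4))]

/-- If `m` is null, nonzero, and `B m ℓ < 0` for a future null `ℓ`, then `m` is future. -/
lemma future_of_B_neg {ℓ m : Fin 5 → ℝ} (hℓ : FutureNull ℓ) (hm0 : m ≠ 0)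
    (hmn : B m m = 0) (hB : B m ℓ < 0) : 0 < m 0 := by
  rcases lt_trichotomy (m 0) 0 with h | h | h
  · exfalso
    have hfm : FutureNull (-m) := by
      refine ⟨fun hc => hm0 (by simpa using congrArg Neg.neg hc), ?_, by simpa using h⟩
      simp only [B, Pi.neg_apply]
      simp only [B] at hmn; linarith
    have := B_nonpos_of_future hℓ hfm
    rw [B_neg_right] at this
    rw [B_symm] at hB
    linarith
  · exact absurd (B_null_zero hmn h) hm0
  · exact h

lemma B_sub_smul (x y v : Fin 5 → ℝ) (a b : ℝ) :
    B (x - a • v) (y - b • v) = B x y - a * B v y - b * B x v + a * b * B v v := by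
  simp only [B, Pi.sub_apply, Pi.smul_apply, smul_eq_mul]; ring

lemma B_sub_smul_right (x v : Fin 5 → ℝ) (a : ℝ) :
    B (x - a • v) v = B x v - a * B v v := by
  simp only [B, Pi.sub_apply, Pi.smul_apply, smul_eq_mul]; ring

lemma B_add (x y z : Fin 5 → ℝ) : B (x + y) z = B x z + B y z := by
  simp only [B, Pi.add_apply]; ring

lemma B_smul (c : ℝ) (x z : Fin 5 → ℝ) : B (c • x) z = c * B x z := by
  simp only [B, Pi.smul_apply, smul_eq_mul]; ring

lemma B_sub (x y z : Fin 5 → ℝ) : B (x - y) z = B x z - B y z := by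
  simp only [B, Pi.sub_apply]; ring

lemma B_sub_right (x y z : Fin 5 → ℝ) : B x (y - z) = B x y - B x z := by
  simp only [B, Pi.sub_apply]; ring

/-- Reflection in a vector `v` with `B v v ≠ 0`, as a linear map. -/
def reflMap (v : Fin 5 → ℝ) : (Fin 5 → ℝ) →ₗ[ℝ] (Fin 5 → ℝ) where
  toFun x := x - (2 * B x v / B v v) • v
  map_add' x y := by
    rw [B_add, show 2 * (B x v + B y v) / B v v
        = 2 * B x v / B v v + 2 * B y v / B v v by ring, add_smul]
    abel
  map_smul' c x := by
    rw [B_smul, RingHom.id_apply, show 2 * (c * B x v) / B v v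
        = c * (2 * B x v / B v v) by ring, mul_smul, smul_sub]

lemma reflMap_apply (v x : Fin 5 → ℝ) :
    reflMap v x = x - (2 * B x v / B v v) • v := rfl

lemma reflMap_involutive {v : Fin 5 → ℝ} (hv : B v v ≠ 0) :
    Function.Involutive (reflMap v) := by
  intro x
  simp only [reflMap_apply, B_sub_smul_right]
  rw [show 2 * B x v / B v v * B v v = 2 * B x v by field_simp]
  rw [show 2 * (B x v - 2 * B x v) / B v v = -(2 * B x v / B v v) by ring, neg_smul]
  abel

lemma reflMap_B {v : Fin 5 → ℝ} (hv : B v v ≠ 0) (x y : Fin 5 → ℝ) :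
    B (reflMap v x) (reflMap v y) = B x y := by
  simp only [reflMap_apply, B_sub_smul]
  rw [B_symm v y]
  field_simp
  ring

theorem stmt2 (G : (Fin 5 → ℝ) → (Fin 5 → ℝ) → ℝ)
    (hinv : ∀ Λ : (Fin 5 → ℝ) ≃ₗ[ℝ] (Fin 5 → ℝ), IsOrthochronousLorentz Λ →
      ∀ x y : Fin 5 → ℝ, G (Λ x) (Λ y) = G x y)
    (hanti : ∀ x y : Fin 5 → ℝ, G x y = -G y x) :
    ∀ ℓ₁ ℓ₂ : Fin 5 → ℝ, FutureNull ℓ₁ → FutureNull ℓ₂ → B ℓ₁ ℓ₂ ≠ 0 →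
      G ℓ₁ ℓ₂ = 0 := by
  intro ℓ₁ ℓ₂ h₁ h₂ hb
  have hb' : B ℓ₁ ℓ₂ < 0 := lt_of_le_of_ne (B_nonpos_of_future h₁ h₂) hb
  set v : Fin 5 → ℝ := ℓ₁ - ℓ₂ with hv_def
  have hvv : B v v = -2 * B ℓ₁ ℓ₂ := by
    rw [hv_def, B_sub, B_sub_right, B_sub_right, h₁.2.1, h₂.2.1, B_symm ℓ₂ ℓ₁]; ring
  have hvne : B v v ≠ 0 := by rw [hvv]; intro h; apply hb; linarith
  set Λ : (Fin 5 → ℝ) ≃ₗ[ℝ] (Fin 5 → ℝ) :=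
    LinearEquiv.ofInvolutive (reflMap v) (reflMap_involutive hvne) with hΛ_def
  have hΛapp : ∀ x, Λ x = reflMap v x := fun x => rfl
  have hΛ₁ : Λ ℓ₁ = ℓ₂ := by
    rw [hΛapp, reflMap_apply]
    have h1 : B ℓ₁ v = -B ℓ₁ ℓ₂ := by rw [hv_def, B_sub_right, h₁.2.1]; ring
    rw [h1, hvv, show 2 * -B ℓ₁ ℓ₂ / (-2 * B ℓ₁ ℓ₂) = 1 by rw [div_eq_one_iff_eq (by intro h; apply hb; linarith)]; ring, one_smul, hv_def]
    abel
  have hΛ₂ : Λ ℓ₂ = ℓ₁ := by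
    rw [hΛapp, reflMap_apply]
    have h1 : B ℓ₂ v = B ℓ₁ ℓ₂ := by
      rw [hv_def, B_sub_right, h₂.2.1, B_symm ℓ₂ ℓ₁]; ring
    rw [h1, hvv, show 2 * B ℓ₁ ℓ₂ / (-2 * B ℓ₁ ℓ₂) = -1 by rw [div_eq_iff (by intro h; apply hb; linarith)]; ring, neg_one_smul, hv_def]
    abel
  have hBΛ : ∀ x y, B (Λ x) (Λ y) = B x y := fun x y => reflMap_B hvne x y
  have horth : IsOrthochronousLorentz Λ := by
    refine ⟨hBΛ, fun ℓ hℓ => ?_⟩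
    have hnull : B (Λ ℓ) (Λ ℓ) = 0 := by rw [hBΛ, hℓ.2.1]
    have hne : Λ ℓ ≠ 0 := by
      intro hc
      apply hℓ.1
      have := congrArg Λ.symm hc
      simpa using this
    rcases lt_or_eq_of_le (B_nonpos_of_future hℓ h₁) with hc1 | hc1
    · -- B ℓ ℓ₁ < 0, so B (Λ ℓ) ℓ₂ = B (Λ ℓ) (Λ ℓ₁) < 0
      have : B (Λ ℓ) ℓ₂ < 0 := by rw [← hΛ₁, hBΛ]; exact hc1
      exact future_of_B_neg h₂ hne hnull this
    · rcases lt_or_eq_of_le (B_nonpos_of_future hℓ h₂) with hc2 | hc2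
      · have : B (Λ ℓ) ℓ₁ < 0 := by rw [← hΛ₂, hBΛ]; exact hc2
        exact future_of_B_neg h₁ hne hnull this
      · -- B ℓ ℓ₁ = 0 and B ℓ ℓ₂ = 0, so B ℓ v = 0 and Λ ℓ = ℓ
        have hlv : B ℓ v = 0 := by rw [hv_def, B_sub_right, hc1, hc2, sub_zero]
        have : Λ ℓ = ℓ := by rw [hΛapp, reflMap_apply, hlv]; simp
        rw [this]; exact hℓ.2.2
  have e1 := hinv Λ horth ℓ₂ ℓ₁
  rw [hΛ₂, hΛ₁] at e1
  have e2 := hanti ℓ₁ ℓ₂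
  linarith
end
end

section
/- For every real τ > 0, the series Σ_{n=1}^{∞} 8n·e^{−2nτ}/(4n² − 1) converges and its sum equals 2 · cosh τ · log(coth(τ/2)) − 2, where coth(x) = cosh(x)/sinh(x). -/
noncomputable section

/-- The hyperbolic cotangent. -/
def coth (x : ℝ) : ℝ := Real.cosh x / Real.sinh x

/-!
With `x = e^{-τ}`, partial fractions split the summand into `2x^{2n}/(2n-1) + 2x^{2n}/(2n+1)`.
Both pieces are the odd series `∑ 2x^{2k+1}/(2k+1) = log((1+x)/(1-x))`, multiplied by `x⁻¹`
and (after an index shift, which costs the `n = 0` term `-2`) by `x`. Finally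
`x + x⁻¹ = 2 cosh τ` and `(1+x)/(1-x) = coth(τ/2)`.
-/

open Real

section

variable {x : ℝ}

theorem hasSum_two_mul_pow_div_two_mul_add_one (hx : |x| < 1) (hx0 : x ≠ 0) :
    HasSum (fun n : ℕ => 2 * x ^ (2 * n) / (2 * n + 1)) (x⁻¹ * (log (1 + x) - log (1 - x))) := by
  refine ((hasSum_log_sub_log_of_abs_lt_one hx).mul_left x⁻¹).congr_fun fun n => ?_
  rw [pow_succ]
  field_simp

theorem hasSum_two_mul_pow_div_two_mul_sub_one (hx : |x| < 1) :
    HasSum (fun n : ℕ => 2 * x ^ (2 * n) / (2 * n - 1)) (x * (log (1 + x) - log (1 - x)) - 2) := by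
  have hshift : HasSum (fun n : ℕ => 2 * x ^ (2 * (n + 1)) / (2 * ((n + 1 : ℕ) : ℝ) - 1))
      (x * (log (1 + x) - log (1 - x))) := by
    refine ((hasSum_log_sub_log_of_abs_lt_one hx).mul_left x).congr_fun fun n => ?_
    rw [show 2 * (n + 1) = 2 * n + 1 + 1 by ring, pow_succ, Nat.cast_succ,
      show 2 * ((n : ℝ) + 1) - 1 = 2 * n + 1 by ring]
    field_simp
  have h := (hasSum_nat_add_iff (f := fun n : ℕ => 2 * x ^ (2 * n) / (2 * (n : ℝ) - 1)) 1).mp hshift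
  norm_num at h
  exact h

theorem two_div_two_mul_sub_one_add_two_div_two_mul_add_one (n : ℕ) :
    2 / (2 * (n : ℝ) - 1) + 2 / (2 * n + 1) = 8 * n / (4 * n ^ 2 - 1) := by
  have hsub : 2 * (n : ℝ) - 1 ≠ 0 := by
    intro h
    have : (2 * n : ℝ) = 1 := by linarith
    norm_cast at this
    omega
  rw [div_add_div _ _ hsub (by positivity)]
  congr 1 <;> ring

theorem hasSum_eight_mul_mul_pow_div (hx : |x| < 1) (hx0 : x ≠ 0) :
    HasSum (fun n : ℕ => 8 * n * x ^ (2 * n) / (4 * n ^ 2 - 1))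
      ((x + x⁻¹) * (log (1 + x) - log (1 - x)) - 2) := by
  convert (hasSum_two_mul_pow_div_two_mul_sub_one hx).add
    (hasSum_two_mul_pow_div_two_mul_add_one hx hx0) using 1
  · ext n
    rw [mul_div_right_comm, ← two_div_two_mul_sub_one_add_two_div_two_mul_add_one]
    ring
  · ring

end

theorem coth_half_eq (τ : ℝ) : coth (τ / 2) = (1 + exp (-τ)) / (1 - exp (-τ)) := by
  have hexp : exp (-τ) = exp (-(τ / 2)) * exp (-(τ / 2)) := by rw [← exp_add]; ring_nf
  rw [coth, cosh_eq, sinh_eq, hexp]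
  set u := exp (τ / 2)
  set v := exp (-(τ / 2))
  have huv : u * v = 1 := by rw [← exp_add, add_neg_cancel, exp_zero]
  calc (u + v) / 2 / ((u - v) / 2) = (u + v) * v / ((u - v) * v) := by
        rw [mul_div_mul_right _ _ (exp_pos _).ne', div_div_div_cancel_right₀ two_ne_zero]
    _ = _ := by congr 1 <;> linear_combination huv

-- The `n = 0` term vanishes, so this is the sum over `n ≥ 1`.
/-- The series Σ_{n≥1} 8n·e^{−2nτ}/(4n²−1); note the `n = 0` term of the
summand below vanishes, so summing over all of ℕ is the same as summing over `n ≥ 1`. -/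
theorem stmt11 (τ : ℝ) (hτ : 0 < τ) :
    HasSum (fun n : ℕ => 8 * (n : ℝ) * Real.exp (-(2 * (n : ℝ)) * τ) / (4 * (n : ℝ) ^ 2 - 1))
      (2 * Real.cosh τ * Real.log (coth (τ / 2)) - 2) := by
  set x := exp (-τ) with hx_def
  have hx0 : 0 < x := exp_pos _
  have hx1 : x < 1 := exp_lt_one_iff.mpr (by linarith)
  have hterm (n : ℕ) : exp (-(2 * (n : ℝ)) * τ) = x ^ (2 * n) := by
    rw [hx_def, ← exp_nat_mul]
    push_cast
    ring_nf
  have hsum : 2 * cosh τ * log (coth (τ / 2)) - 2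
      = (x + x⁻¹) * (log (1 + x) - log (1 - x)) - 2 := by
    rw [coth_half_eq, ← hx_def, log_div (by linarith) (by linarith), cosh_eq, hx_def, exp_neg τ,
      inv_inv]
    ring
  simp only [hterm, hsum]
  exact hasSum_eight_mul_mul_pow_div (abs_lt.mpr ⟨by linarith, hx1⟩) hx0.ne'
end
end
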